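/- arXiv:2505.19343 — 7 statements merged into one kernel-verified Lean document; each statement's English description precedes it below -/
import Mathlib

section
/- Let m ≥ 0 and let D^m denote the closed unit ball in EuclideanSpace ℝ (Fin m) (with its subspace topology) and D^{m+1} the closed unit ball in EuclideanSpace ℝ (Fin (m+1)). Then the quotient topological space of D^m × [0,1] by the equivalence relation generated by (y,t) ~ (y,t') for all y ∈ D^m with ‖y‖ = 1 and all t, t' ∈ [0,1] is homeomorphic to D^{m+1}. -/
open Metric unitInterval

noncomputable section

def Disk (m : ℕ) : Set (EuclideanSpace ℝ (Fin m)) := Metric.closedBall 0 1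

def hobRel (m : ℕ) (p q : ↥(Disk m) × I) : Prop :=
  p.1 = q.1 ∧ ‖(p.1 : EuclideanSpace ℝ (Fin m))‖ = 1

namespace HOBaux

variable {m : ℕ}

/-- append a last coordinate -/
def snocE (y : EuclideanSpace ℝ (Fin m)) (s : ℝ) : EuclideanSpace ℝ (Fin (m+1)) :=
  (EuclideanSpace.equiv (Fin (m+1)) ℝ).symm (Fin.snoc ((EuclideanSpace.equiv (Fin m) ℝ) y) s)

@[simp] lemma snocE_castSucc (y : EuclideanSpace ℝ (Fin m)) (s : ℝ) (i : Fin m) :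
    snocE y s i.castSucc = y i := by simp [snocE]

@[simp] lemma snocE_last (y : EuclideanSpace ℝ (Fin m)) (s : ℝ) :
    snocE y s (Fin.last m) = s := by simp [snocE]

lemma sq_norm (y : EuclideanSpace ℝ (Fin m)) : ‖y‖^2 = ∑ i, ‖y i‖^2 := by
  rw [EuclideanSpace.norm_eq, Real.sq_sqrt]
  positivity

lemma sq_norm_snocE (y : EuclideanSpace ℝ (Fin m)) (s : ℝ) :
    ‖snocE y s‖^2 = ‖y‖^2 + s^2 := by
  rw [sq_norm, sq_norm, Fin.sum_univ_castSucc]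
  simp [sq_abs]

end HOBaux

namespace HOBaux
variable {m : ℕ}

lemma norm_le_one (y : ↥(Disk m)) : ‖(y : EuclideanSpace ℝ (Fin m))‖ ≤ 1 := by
  exact mem_closedBall_zero_iff.mp y.2

def hmap (p : ↥(Disk m) × I) : ↥(Disk (m+1)) :=
  ⟨snocE (p.1 : EuclideanSpace ℝ (Fin m))
      ((2 * (p.2 : ℝ) - 1) * Real.sqrt (1 - ‖(p.1 : EuclideanSpace ℝ (Fin m))‖^2)), by
    have hy := norm_le_one p.1
    have hy2 : ‖(p.1 : EuclideanSpace ℝ (Fin m))‖^2 ≤ 1 := by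
      nlinarith [norm_nonneg (p.1 : EuclideanSpace ℝ (Fin m))]
    have ht : |2 * (p.2 : ℝ) - 1| ≤ 1 := by
      have h1 := p.2.2.1; have h2 := p.2.2.2
      rw [abs_le]; constructor <;> linarith
    have hsq : ((2 * (p.2 : ℝ) - 1) * Real.sqrt (1 - ‖(p.1 : EuclideanSpace ℝ (Fin m))‖^2))^2
        ≤ 1 - ‖(p.1 : EuclideanSpace ℝ (Fin m))‖^2 := by
      rw [mul_pow, Real.sq_sqrt (by linarith)]
      have h1 : (2 * (p.2 : ℝ) - 1)^2 ≤ 1 := by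
        nlinarith [sq_abs (2 * (p.2 : ℝ) - 1), abs_nonneg (2 * (p.2 : ℝ) - 1)]
      nlinarith
    have : ‖snocE (p.1 : EuclideanSpace ℝ (Fin m))
        ((2 * (p.2 : ℝ) - 1) * Real.sqrt (1 - ‖(p.1 : EuclideanSpace ℝ (Fin m))‖^2))‖^2 ≤ 1 := by
      rw [sq_norm_snocE]; linarith
    simp only [Disk, Metric.mem_closedBall, dist_zero_right]
    nlinarith [norm_nonneg (snocE (p.1 : EuclideanSpace ℝ (Fin m))
        ((2 * (p.2 : ℝ) - 1) * Real.sqrt (1 - ‖(p.1 : EuclideanSpace ℝ (Fin m))‖^2)))]⟩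

lemma continuous_hmap : Continuous (hmap (m := m)) := by
  apply Continuous.subtype_mk
  apply ((EuclideanSpace.equiv (Fin (m+1)) ℝ).symm.continuous).comp
  apply continuous_pi
  intro i
  refine Fin.lastCases ?_ ?_ i
  · simp only [Fin.snoc_last]
    fun_prop
  · intro j
    simp only [Fin.snoc_castSucc]
    fun_prop

end HOBaux

namespace HOBaux
variable {m : ℕ}

lemma hmap_respects (p q : ↥(Disk m) × I) (h : hobRel m p q) : hmap p = hmap q := by
  obtain ⟨h1, h2⟩ := h
  apply Subtype.ext
  simp only [hmap, h1]
  rw [← h1, h2]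
  norm_num

lemma hmap_eq (p q : ↥(Disk m) × I) (h : hmap p = hmap q) :
    Quot.mk (hobRel m) p = Quot.mk (hobRel m) q := by
  have hcoord : ∀ i : Fin (m+1),
      ((hmap p : ↥(Disk (m+1))) : EuclideanSpace ℝ (Fin (m+1))) i
        = ((hmap q : ↥(Disk (m+1))) : EuclideanSpace ℝ (Fin (m+1))) i := by
    intro i; rw [h]
  have hy : p.1 = q.1 := by
    apply Subtype.ext
    apply (EuclideanSpace.equiv (Fin m) ℝ).injective
    funext i
    have := hcoord i.castSucc
    simpa [hmap] using this
  by_cases hb : ‖(p.1 : EuclideanSpace ℝ (Fin m))‖ = 1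
  · exact Quot.sound ⟨hy, hb⟩
  · have hlast := hcoord (Fin.last m)
    simp only [hmap, snocE_last] at hlast
    rw [← hy] at hlast
    have hy1 : ‖(p.1 : EuclideanSpace ℝ (Fin m))‖ < 1 :=
      lt_of_le_of_ne (norm_le_one p.1) hb
    have hrpos : 0 < Real.sqrt (1 - ‖(p.1 : EuclideanSpace ℝ (Fin m))‖^2) := by
      apply Real.sqrt_pos.mpr
      nlinarith [norm_nonneg (p.1 : EuclideanSpace ℝ (Fin m))]
    have ht : (p.2 : ℝ) = (q.2 : ℝ) := by
      have := mul_right_cancel₀ (ne_of_gt hrpos) hlast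
      linarith
    have : p = q := Prod.ext hy (Subtype.ext ht)
    rw [this]

lemma hmap_surjective : Function.Surjective (hmap (m := m)) := by
  rintro ⟨x, hx⟩
  set y : EuclideanSpace ℝ (Fin m) :=
    (EuclideanSpace.equiv (Fin m) ℝ).symm (fun i => x i.castSucc) with hy
  set s : ℝ := x (Fin.last m) with hs
  have hxy : x = snocE y s := by
    apply (EuclideanSpace.equiv (Fin (m+1)) ℝ).injective
    funext i
    refine Fin.lastCases ?_ ?_ i
    · simp [snocE, hs]
    · intro j; simp [snocE, hy]
  have hnx : ‖x‖^2 = ‖y‖^2 + s^2 := by rw [hxy, sq_norm_snocE]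
  have hx1 : ‖x‖ ≤ 1 := mem_closedBall_zero_iff.mp hx
  have hx2 : ‖y‖^2 + s^2 ≤ 1 := by nlinarith [norm_nonneg x]
  have hy1 : ‖y‖ ≤ 1 := by nlinarith [norm_nonneg y, sq_nonneg s]
  have hymem : y ∈ Disk m := mem_closedBall_zero_iff.mpr hy1
  set r : ℝ := Real.sqrt (1 - ‖y‖^2) with hr
  have hr2 : r^2 = 1 - ‖y‖^2 := Real.sq_sqrt (by nlinarith [norm_nonneg y])
  have hsr : s^2 ≤ r^2 := by rw [hr2]; linarith
  by_cases h0 : r = 0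
  · have hs0 : s = 0 := by nlinarith [sq_nonneg s]
    refine ⟨(⟨y, hymem⟩, ⟨1/2, by norm_num, by norm_num⟩), ?_⟩
    apply Subtype.ext
    simp only [hmap]
    rw [hxy, hs0]
    norm_num
  · have hrpos : 0 < r := lt_of_le_of_ne (Real.sqrt_nonneg _) (Ne.symm h0)
    have hsle : s ≤ r := by nlinarith
    have hsge : -r ≤ s := by nlinarith
    have ht0 : (0:ℝ) ≤ (s/r + 1)/2 := by
      have : -1 ≤ s/r := by rw [neg_le, ← neg_div, div_le_one hrpos]; linarith
      linarith
    have ht1 : (s/r + 1)/2 ≤ 1 := by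
      have : s/r ≤ 1 := (div_le_one hrpos).mpr hsle
      linarith
    refine ⟨(⟨y, hymem⟩, ⟨(s/r + 1)/2, ht0, ht1⟩), ?_⟩
    apply Subtype.ext
    simp only [hmap]
    rw [hxy]
    have harg : (2 * ((s/r + 1)/2) - 1) * r = s := by
      field_simp
      ring
    rw [harg]

end HOBaux

/-- The half open book on the `m`-disk page is homeomorphic to the `(m+1)`-disk. -/
theorem halfOpenBook_disk_homeomorph_disk (m : ℕ) :
    Nonempty (Quot (hobRel m) ≃ₜ ↥(Disk (m + 1))) := by
  haveI : CompactSpace ↥(Disk m) :=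
    isCompact_iff_compactSpace.mp (isCompact_closedBall (0 : EuclideanSpace ℝ (Fin m)) 1)
  let f : Quot (hobRel m) → ↥(Disk (m+1)) := Quot.lift HOBaux.hmap HOBaux.hmap_respects
  have hinj : Function.Injective f := by
    rintro ⟨p⟩ ⟨q⟩ h
    exact HOBaux.hmap_eq p q h
  have hsurj : Function.Surjective f := fun x => by
    obtain ⟨p, hp⟩ := HOBaux.hmap_surjective x
    exact ⟨Quot.mk _ p, hp⟩
  have hcont : Continuous f := continuous_quot_lift _ HOBaux.continuous_hmap
  exact ⟨Continuous.homeoOfEquivCompactToT2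
    (f := Equiv.ofBijective f ⟨hinj, hsurj⟩) hcont⟩
end
end

section
/- Let m ≥ 1. Let Q be the quotient topological space of D^m × [0,1] by the equivalence relation generated by (y,t) ~ (y,t') for all y ∈ D^m with ‖y‖ = 1 and all t, t' ∈ [0,1], and let q : D^m × [0,1] → Q be the quotient map. Then there exists a homeomorphism h : Q → D^{m+1} such that h maps the set q(D^m × {0,1}) (the union of the images of the front cover D^m × {0} and the back cover D^m × {1}) onto the unit sphere S^m = {x ∈ D^{m+1} : ‖x‖ = 1}. -/
open Metric unitInterval

noncomputable section

/-!
Send `(y, t) ∈ D^m × [0,1]` to `(y, (2t - 1)√(1 - ‖y‖²)) ∈ D^{m+1}`. This continuous surjection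
from a compact space onto a Hausdorff one is injective except over the boundary sphere of the
page, where it collapses each segment `{y} × [0,1]` to a point, so it descends to a homeomorphism
on the half open book. The covers `t = 0` and `t = 1` land on the lower and upper hemispheres,
since there `‖y‖² + (1 - ‖y‖²) = 1`.
-/

def Continuous.homeoQuotOfCompactToT2 {X Y : Type*} [TopologicalSpace X] [TopologicalSpace Y]
    [CompactSpace X] [T2Space Y] {r : X → X → Prop} {f : X → Y} (hf : Continuous f)
    (hsurj : Function.Surjective f) (hr : ∀ p q, r p q → f p = f q)
    (hfib : ∀ p q, f p = f q → Quot.mk r p = Quot.mk r q) : Quot r ≃ₜ Y :=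
  Continuous.homeoOfEquivCompactToT2 (f := Equiv.ofBijective (Quot.lift f hr)
    ⟨fun a b ↦ Quot.induction_on₂ a b hfib, (Quot.surjective_lift hr).mpr hsurj⟩)
    (continuous_quot_lift _ hf)

theorem exists_unitInterval_mul_eq {s c : ℝ} (h : |s| ≤ c) :
    ∃ t : I, (2 * (t : ℝ) - 1) * c = s ∧ (|s| = c → t = 0 ∨ t = 1) := by
  by_cases hsc : |s| = c
  · rcases (abs_eq ((abs_nonneg s).trans h)).mp hsc with rfl | rfl
    · exact ⟨1, by norm_num, fun _ ↦ Or.inr rfl⟩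
    · exact ⟨0, by norm_num, fun _ ↦ Or.inl rfl⟩
  have hc : 0 < c := (abs_nonneg s).trans_lt (h.lt_of_ne hsc)
  have hsc1 : |s / c| ≤ 1 := by
    rw [abs_div, abs_of_pos hc]
    exact div_le_one_of_le₀ h hc.le
  obtain ⟨hlo, hhi⟩ := abs_le.mp hsc1
  refine ⟨⟨(1 + s / c) / 2, by linarith, by linarith⟩, ?_, fun h' ↦ absurd h' hsc⟩
  field_simp
  ring

section PageToBall

variable {E : Type*} [SeminormedAddCommGroup E]

/-- The page point `(y, t)` goes to height `(2t - 1)√(1 - ‖y‖²)` on the chord of the unit ball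
of `E ⊕₂ ℝ` above `y`; the chord degenerates to a point exactly when `‖y‖ = 1`. -/
def pageToBall (y : E) (t : I) : WithLp 2 (E × ℝ) :=
  WithLp.toLp 2 (y, (2 * (t : ℝ) - 1) * √(1 - ‖y‖ ^ 2))

theorem continuous_pageToBall : Continuous fun p : E × I ↦ pageToBall p.1 p.2 := by
  unfold pageToBall
  fun_prop

theorem norm_sq_pageToBall {y : E} (hy : ‖y‖ ≤ 1) (t : I) :
    ‖pageToBall y t‖ ^ 2 = ‖y‖ ^ 2 + (2 * (t : ℝ) - 1) ^ 2 * (1 - ‖y‖ ^ 2) := by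
  have : 0 ≤ 1 - ‖y‖ ^ 2 := by nlinarith [norm_nonneg y]
  rw [WithLp.prod_norm_sq_eq_of_L2]
  simp [pageToBall, mul_pow, Real.sq_sqrt this]

theorem norm_pageToBall_le_one {y : E} (hy : ‖y‖ ≤ 1) (t : I) : ‖pageToBall y t‖ ≤ 1 := by
  have h0 : 0 ≤ 1 - ‖y‖ ^ 2 := by nlinarith [norm_nonneg y]
  have ht : (2 * (t : ℝ) - 1) ^ 2 ≤ 1 := by nlinarith [t.2.1, t.2.2]
  rw [← sq_le_one_iff₀ (norm_nonneg _), norm_sq_pageToBall hy]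
  nlinarith

theorem norm_pageToBall_eq_one {y : E} (hy : ‖y‖ ≤ 1) {t : I} (ht : t = 0 ∨ t = 1) :
    ‖pageToBall y t‖ = 1 := by
  rw [← pow_eq_one_iff_of_nonneg (norm_nonneg _) two_ne_zero, norm_sq_pageToBall hy]
  rcases ht with rfl | rfl <;> norm_num

theorem pageToBall_eq_pageToBall_iff {y y' : E} (hy : ‖y‖ ≤ 1) {t t' : I} :
    pageToBall y t = pageToBall y' t' ↔ y = y' ∧ (‖y‖ = 1 ∨ t = t') := by
  simp only [pageToBall, (WithLp.toLp_injective 2).eq_iff, Prod.mk.injEq]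
  constructor
  · rintro ⟨rfl, h⟩
    refine ⟨rfl, or_iff_not_imp_left.mpr fun hy1 ↦ ?_⟩
    have : 0 < √(1 - ‖y‖ ^ 2) :=
      Real.sqrt_pos.mpr (by nlinarith [norm_nonneg y, hy.lt_of_ne hy1])
    exact Subtype.ext (by nlinarith [mul_right_cancel₀ this.ne' h])
  · rintro ⟨rfl, hy1 | rfl⟩ <;> simp [*]

theorem exists_pageToBall_eq {x : WithLp 2 (E × ℝ)} (hx : ‖x‖ ≤ 1) :
    ∃ y t, ‖y‖ ≤ 1 ∧ pageToBall y t = x ∧ (‖x‖ = 1 → t = 0 ∨ t = 1) := by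
  have hsum := WithLp.prod_norm_sq_eq_of_L2 x
  rw [Real.norm_eq_abs, sq_abs] at hsum
  have hy : ‖x.fst‖ ≤ 1 := by nlinarith [norm_nonneg x, norm_nonneg x.fst, sq_nonneg x.snd]
  have hs : |x.snd| ≤ √(1 - ‖x.fst‖ ^ 2) := Real.abs_le_sqrt (by nlinarith [norm_nonneg x])
  obtain ⟨t, ht, hcover⟩ := exists_unitInterval_mul_eq hs
  refine ⟨x.fst, t, hy, by rw [pageToBall, ht]; rfl, fun hx1 ↦ hcover ?_⟩
  rw [← Real.sqrt_sq_eq_abs]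
  congr 1
  rw [hx1] at hsum
  linarith

end PageToBall

def EuclideanSpace.splitLast (m : ℕ) :
    EuclideanSpace ℝ (Fin (m + 1)) ≃ₗᵢ[ℝ] WithLp 2 (EuclideanSpace ℝ (Fin m) × ℝ) :=
  (LinearIsometryEquiv.piLpCongrLeft 2 ℝ ℝ finSumFinEquiv.symm).trans <|
    (PiLp.sumPiLpEquivProdLpPiLp 2 fun _ ↦ ℝ).trans <|
      LinearIsometryEquiv.withLpProdCongr 2 (LinearIsometryEquiv.refl ℝ _)
        (OrthonormalBasis.singleton (Fin 1) ℝ).repr.symm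

namespace Disk

variable {m : ℕ}

instance : CompactSpace (Disk m) :=
  isCompact_iff_compactSpace.mp (isCompact_closedBall 0 1)

theorem norm_le_one (y : Disk m) : ‖(y : EuclideanSpace ℝ (Fin m))‖ ≤ 1 :=
  mem_closedBall_zero_iff.mp y.2

theorem mem_iff {x : EuclideanSpace ℝ (Fin m)} : x ∈ Disk m ↔ ‖x‖ ≤ 1 :=
  mem_closedBall_zero_iff

end Disk

def hobMap (m : ℕ) (p : Disk m × I) : Disk (m + 1) :=
  ⟨(EuclideanSpace.splitLast m).symm (pageToBall (p.1 : EuclideanSpace ℝ (Fin m)) p.2), by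
    rw [Disk.mem_iff, LinearIsometryEquiv.norm_map]
    exact norm_pageToBall_le_one (Disk.norm_le_one p.1) p.2⟩

theorem hobMap_eq_hobMap_iff {m : ℕ} {p q : Disk m × I} :
    hobMap m p = hobMap m q ↔ p = q ∨ hobRel m p q := by
  rw [hobMap, hobMap, Subtype.mk.injEq, (EuclideanSpace.splitLast m).symm.injective.eq_iff,
    pageToBall_eq_pageToBall_iff (Disk.norm_le_one p.1), hobRel]
  simp only [Prod.ext_iff, Subtype.ext_iff]
  tauto

theorem continuous_hobMap (m : ℕ) : Continuous (hobMap m) :=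
  ((EuclideanSpace.splitLast m).symm.continuous.comp <|
    continuous_pageToBall.comp (continuous_subtype_val.prodMap continuous_id)).subtype_mk _

theorem exists_hobMap_eq {m : ℕ} (x : Disk (m + 1)) :
    ∃ p, hobMap m p = x ∧ (‖(x : EuclideanSpace ℝ (Fin (m + 1)))‖ = 1 → p.2 = 0 ∨ p.2 = 1) := by
  have hx : ‖EuclideanSpace.splitLast m x‖ ≤ 1 := by
    rw [LinearIsometryEquiv.norm_map]; exact Disk.norm_le_one x
  obtain ⟨y, t, hy, hyt, hcover⟩ := exists_pageToBall_eq hx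
  refine ⟨(⟨y, Disk.mem_iff.mpr hy⟩, t), Subtype.ext ?_, ?_⟩
  · simp [hobMap, hyt]
  · simpa using hcover

theorem hobMap_image_covers (m : ℕ) :
    hobMap m '' {p | p.2 = 0 ∨ p.2 = 1} =
      {x : Disk (m + 1) | ‖(x : EuclideanSpace ℝ (Fin (m + 1)))‖ = 1} := by
  ext x
  constructor
  · rintro ⟨p, hp, rfl⟩
    simpa [hobMap] using norm_pageToBall_eq_one (Disk.norm_le_one p.1) hp
  · intro hx
    obtain ⟨p, rfl, hcover⟩ := exists_hobMap_eq x
    exact ⟨p, hcover hx, rfl⟩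

def hobHomeomorph (m : ℕ) : Quot (hobRel m) ≃ₜ Disk (m + 1) :=
  (continuous_hobMap m).homeoQuotOfCompactToT2
    (fun x ↦ (exists_hobMap_eq x).imp fun _ ↦ And.left)
    (fun _ _ h ↦ hobMap_eq_hobMap_iff.mpr (Or.inr h))
    (fun _ _ h ↦ (hobMap_eq_hobMap_iff.mp h).elim (congrArg _) Quot.sound)

theorem halfOpenBook_disk_boundary_general (m : ℕ) :
    ∃ h : Quot (hobRel m) ≃ₜ ↥(Disk (m + 1)),
      ⇑h '' (Quot.mk (hobRel m) '' {p : ↥(Disk m) × I | p.2 = 0 ∨ p.2 = 1}) =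
        {x : ↥(Disk (m + 1)) | ‖(x : EuclideanSpace ℝ (Fin (m + 1)))‖ = 1} :=
  ⟨hobHomeomorph m, by rw [← Set.image_comp]; exact hobMap_image_covers m⟩

/-- There is a homeomorphism from the half open book on the `m`-disk page to the
`(m+1)`-disk carrying the union of the images of the front cover `D^m × {0}` and the
back cover `D^m × {1}` onto the boundary unit sphere. -/
theorem halfOpenBook_disk_boundary (m : ℕ) (hm : 1 ≤ m) :
    ∃ h : Quot (hobRel m) ≃ₜ ↥(Disk (m + 1)),
      ⇑h '' (Quot.mk (hobRel m) '' {p : ↥(Disk m) × I | p.2 = 0 ∨ p.2 = 1}) =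
        {x : ↥(Disk (m + 1)) | ‖(x : EuclideanSpace ℝ (Fin (m + 1)))‖ = 1} :=
  halfOpenBook_disk_boundary_general m
end
end

section
/- Let S^1 denote the unit circle in ℝ² and D^2 the closed unit disk in ℝ². The quotient topological space of (S^1 × [0,1]) × [0,1] by the equivalence relation generated by ((z,a),t) ~ ((z,a),t') for all z ∈ S^1, a ∈ {0,1}, and t,t' ∈ [0,1], is homeomorphic to the solid torus S^1 × D^2. -/
/-!
The circle factor plays no role: the relation only collapses, for each `z ∈ S¹`, the two
vertical sides `{0} × [0,1]` and `{1} × [0,1]` of the square `[0,1] × [0,1]` of pairs `(a, t)`.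
The map `(a, t) ↦ (2a - 1, (2t - 1) √(1 - (2a - 1)²))` sends that square onto the disk `D²`,
crushing exactly those two sides to the points `(∓1, 0)`. Since the annulus times `[0,1]` is
compact and `S¹ × D²` is Hausdorff, the induced continuous bijection from the quotient is a
homeomorphism.
-/

open Metric unitInterval

noncomputable section

/-- The unit sphere of dimension `m` in `EuclideanSpace ℝ (Fin (m+1))`. -/
def Sph (m : ℕ) : Set (EuclideanSpace ℝ (Fin (m + 1))) := Metric.sphere 0 1

/-- The relation generating the half open book quotient on the annulus page
`S¹ × [0,1]`: `((z,a), t) ~ ((z,a), t')` for `a ∈ {0,1}` and all `t, t' ∈ [0,1]`. -/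
def annulusHobRel (p q : (↥(Sph 1) × I) × I) : Prop :=
  p.1 = q.1 ∧ (p.1.2 = 0 ∨ p.1.2 = 1)

def Quot.homeomorphOfFibers {X Y : Type*} [TopologicalSpace X] [CompactSpace X]
    [TopologicalSpace Y] [T2Space Y] {r : X → X → Prop} (f : X → Y) (hf : Continuous f)
    (hsurj : Function.Surjective f) (hrel : ∀ p q, r p q → f p = f q)
    (hfib : ∀ p q, f p = f q → Quot.mk r p = Quot.mk r q) : Quot r ≃ₜ Y :=
  have hinj : Function.Injective (Quot.lift f hrel) := by
    rintro ⟨p⟩ ⟨q⟩ h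
    exact hfib p q h
  (continuous_quot_lift hrel hf).homeoOfEquivCompactToT2
    (f := Equiv.ofBijective _ ⟨hinj, (Quot.surjective_lift hrel).2 hsurj⟩)

lemma mem_disk_two_iff {v : EuclideanSpace ℝ (Fin 2)} : v ∈ Disk 2 ↔ v 0 ^ 2 + v 1 ^ 2 ≤ 1 := by
  rw [Disk, mem_closedBall_zero_iff, ← sq_le_one_iff₀ (norm_nonneg v),
    EuclideanSpace.real_norm_sq_eq, Fin.sum_univ_two]

/-- Collapses the vertical sides of the unit square to the two poles `(∓1, 0)` of the disk,
sending each vertical segment `{a} × [0,1]` linearly onto a vertical chord. -/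
def squareToDisk (a t : ℝ) : EuclideanSpace ℝ (Fin 2) :=
  !₂[2 * a - 1, (2 * t - 1) * √(1 - (2 * a - 1) ^ 2)]

lemma continuous_squareToDisk : Continuous fun p : ℝ × ℝ ↦ squareToDisk p.1 p.2 := by
  unfold squareToDisk
  fun_prop

lemma sqrt_one_sub_sq_eq_zero_iff {a : ℝ} (ha : a ∈ I) :
    √(1 - (2 * a - 1) ^ 2) = 0 ↔ a = 0 ∨ a = 1 := by
  have h : 1 - (2 * a - 1) ^ 2 = 4 * (a * (1 - a)) := by ring
  have hnonneg : 0 ≤ a * (1 - a) := mul_nonneg ha.1 (sub_nonneg.2 ha.2)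
  rw [Real.sqrt_eq_zero', h]
  constructor
  · intro hle
    rcases mul_eq_zero.1 (le_antisymm (by linarith) hnonneg) with h0 | h1
    · exact .inl h0
    · exact .inr (by linarith)
  · rintro (rfl | rfl) <;> norm_num

lemma squareToDisk_mem_disk {a t : ℝ} (ha : a ∈ I) (ht : t ∈ I) : squareToDisk a t ∈ Disk 2 := by
  have hs : √(1 - (2 * a - 1) ^ 2) ^ 2 = 1 - (2 * a - 1) ^ 2 :=
    Real.sq_sqrt (by nlinarith [ha.1, ha.2])
  have ht' : (2 * t - 1) ^ 2 ≤ 1 := by nlinarith [ht.1, ht.2]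
  rw [mem_disk_two_iff]
  simp only [squareToDisk, PiLp.toLp_apply, Matrix.cons_val_zero, Matrix.cons_val_one, mul_pow, hs]
  nlinarith [hs ▸ sq_nonneg √(1 - (2 * a - 1) ^ 2)]

lemma exists_squareToDisk_eq_of_mem_disk {v : EuclideanSpace ℝ (Fin 2)} (hv : v ∈ Disk 2) :
    ∃ a ∈ I, ∃ t ∈ I, squareToDisk a t = v := by
  rw [mem_disk_two_iff] at hv
  set w := √(1 - v 0 ^ 2)
  have hw : 0 ≤ w := Real.sqrt_nonneg _
  have hv1 : |v 1| ≤ w := Real.abs_le_sqrt (by linarith)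
  obtain ⟨hv0l, hv0r⟩ := abs_le_of_sq_le_sq' (a := v 0) (b := 1) (by nlinarith) zero_le_one
  -- `v 1 / w` is `0` when `w = 0`, so the choice of `t` needs no case split
  have hq : |v 1 / w| ≤ 1 := by rw [abs_div, abs_of_nonneg hw]; exact div_le_one_of_le₀ hv1 hw
  obtain ⟨hql, hqr⟩ := abs_le.1 hq
  refine ⟨(v 0 + 1) / 2, ⟨by linarith, by linarith⟩,
    (v 1 / w + 1) / 2, ⟨by linarith, by linarith⟩, ?_⟩
  have hw0 : w = 0 → v 1 = 0 := fun h ↦ abs_nonpos_iff.1 (h ▸ hv1)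
  have hx : 2 * ((v 0 + 1) / 2) - 1 = v 0 := by ring
  have hy : 2 * ((v 1 / w + 1) / 2) - 1 = v 1 / w := by ring
  ext i
  fin_cases i
  · simp [squareToDisk, hx]
  · simpa [squareToDisk, hx, hy] using div_mul_cancel_of_imp hw0

lemma squareToDisk_eq_squareToDisk_iff {a a' t t' : ℝ} (ha : a ∈ I) :
    squareToDisk a t = squareToDisk a' t' ↔ a = a' ∧ (t = t' ∨ a = 0 ∨ a = 1) := by
  constructor
  · intro h
    have h0 := congrArg (· 0) h
    have h1 := congrArg (· 1) h
    simp only [squareToDisk, PiLp.toLp_apply, Matrix.cons_val_zero, Matrix.cons_val_one] at h0 h1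
    obtain rfl : a = a' := by linarith
    refine ⟨rfl, ?_⟩
    rcases mul_eq_mul_right_iff.1 h1 with ht | hw
    · exact .inl (by linarith)
    · exact .inr ((sqrt_one_sub_sq_eq_zero_iff ha).1 hw)
  · rintro ⟨rfl, rfl | hboundary⟩
    · rfl
    · simp [squareToDisk, (sqrt_one_sub_sq_eq_zero_iff ha).2 hboundary]

instance (m : ℕ) : CompactSpace (Sph m) :=
  isCompact_iff_compactSpace.mp (isCompact_sphere 0 1)

def annulusToSolidTorus (p : (↥(Sph 1) × I) × I) : ↥(Sph 1) × ↥(Disk 2) :=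
  (p.1.1, ⟨squareToDisk p.1.2 p.2, squareToDisk_mem_disk p.1.2.2 p.2.2⟩)

lemma continuous_annulusToSolidTorus : Continuous annulusToSolidTorus :=
  (continuous_fst.comp continuous_fst).prodMk <| Continuous.subtype_mk
    (continuous_squareToDisk.comp
      (f := fun p : (↥(Sph 1) × I) × I ↦ ((p.1.2 : ℝ), (p.2 : ℝ))) (by fun_prop)) _

lemma surjective_annulusToSolidTorus : Function.Surjective annulusToSolidTorus := by
  rintro ⟨z, v, hv⟩
  obtain ⟨a, ha, t, ht, rfl⟩ := exists_squareToDisk_eq_of_mem_disk hv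
  exact ⟨((z, ⟨a, ha⟩), ⟨t, ht⟩), rfl⟩

lemma annulusToSolidTorus_eq_iff {p q : (↥(Sph 1) × I) × I} :
    annulusToSolidTorus p = annulusToSolidTorus q ↔ p = q ∨ annulusHobRel p q := by
  obtain ⟨⟨z, a⟩, t⟩ := p
  obtain ⟨⟨z', a'⟩, t'⟩ := q
  simp only [annulusToSolidTorus, annulusHobRel, Prod.mk.injEq,
    squareToDisk_eq_squareToDisk_iff a.2, Subtype.ext_iff, Set.Icc.coe_eq_zero, Set.Icc.coe_eq_one]
  tauto

/-- The half open book with annulus page is homeomorphic to the solid torus `S¹ × D²`. -/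
theorem halfOpenBook_annulus_homeomorph_solidTorus :
    Nonempty (Quot annulusHobRel ≃ₜ ↥(Sph 1) × ↥(Disk 2)) :=
  ⟨Quot.homeomorphOfFibers annulusToSolidTorus continuous_annulusToSolidTorus
    surjective_annulusToSolidTorus
    (fun _ _ h ↦ annulusToSolidTorus_eq_iff.2 (.inr h))
    fun _ _ h ↦ (annulusToSolidTorus_eq_iff.1 h).elim (congrArg _) Quot.sound⟩
end
end

section
/- Let m ≥ 1. The quotient topological space of D^m × [0,1] by the equivalence relation generated by (i) (y,t) ~ (y,t') for all y ∈ D^m with ‖y‖ = 1 and all t,t' ∈ [0,1], and (ii) (x,1) ~ (x,0) for all x ∈ D^m, is homeomorphic to the unit sphere S^{m+1} in EuclideanSpace ℝ (Fin (m+2)). -/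
open Metric unitInterval

noncomputable section

/-- The relation generating the open book quotient on the `m`-disk page with trivial
monodromy: `(y,t) ~ (y,t')` for `‖y‖ = 1` and `(x,1) ~ (x,0)` for all `x`. -/
def obRel (m : ℕ) (p q : ↥(Disk m) × I) : Prop :=
  (p.1 = q.1 ∧ ‖(p.1 : EuclideanSpace ℝ (Fin m))‖ = 1) ∨
  (p.1 = q.1 ∧ p.2 = 1 ∧ q.2 = 0)

/-
The map `(x, t) ↦ (x, √(1 - ‖x‖²) · e^{2πit})` sends `D^m × [0,1]` onto the unit sphere of
`ℝ^m × ℂ ≅ ℝ^{m+2}`. Two points have the same image exactly when they are identified by the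
open book relation: over the binding `‖x‖ = 1` the circle factor is scaled to zero, and otherwise
only the ends `t = 0` and `t = 1` of the loop meet. A continuous bijection from the compact
quotient onto the Hausdorff sphere is a homeomorphism.
-/

open Function Real

def quotHomeomorphOfFibers {X Y : Type*} [TopologicalSpace X] [CompactSpace X]
    [TopologicalSpace Y] [T2Space Y] (r : X → X → Prop) (f : X → Y) (hf : Continuous f)
    (hsurj : Surjective f) (hr : ∀ a b, r a b → f a = f b)
    (hfib : ∀ a b, f a = f b → Quot.mk r a = Quot.mk r b) : Quot r ≃ₜ Y :=
  have hinj : Injective (Quot.lift f hr) := by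
    rintro ⟨a⟩ ⟨b⟩
    exact hfib a b
  (continuous_quot_lift hr hf).homeoOfEquivCompactToT2
    (f := Equiv.ofBijective _ ⟨hinj, (Quot.surjective_lift hr).2 hsurj⟩)

section SphereJoin

variable {E F : Type*} [NormedAddCommGroup E] [NormedAddCommGroup F] [NormedSpace ℝ F]

def sphereJoin (p : closedBall (0 : E) 1 × sphere (0 : F) 1) : sphere (0 : WithLp 2 (E × F)) 1 :=
  ⟨WithLp.toLp 2 ((p.1 : E), √(1 - ‖(p.1 : E)‖ ^ 2) • (p.2 : F)), by
    have hx : ‖(p.1 : E)‖ ^ 2 ≤ 1 := pow_le_one₀ (norm_nonneg _) (mem_closedBall_zero_iff.1 p.1.2)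
    rw [mem_sphere_zero_iff_norm, ← pow_eq_one_iff_of_nonneg (norm_nonneg _) two_ne_zero,
      WithLp.prod_norm_sq_eq_of_L2]
    simp [norm_smul, mem_sphere_zero_iff_norm.1 p.2.2, Real.sq_sqrt (sub_nonneg.2 hx)]⟩

theorem continuous_sphereJoin : Continuous (sphereJoin (E := E) (F := F)) := by
  unfold sphereJoin
  fun_prop

theorem sphereJoin_eq_sphereJoin_iff {p q : closedBall (0 : E) 1 × sphere (0 : F) 1} :
    sphereJoin p = sphereJoin q ↔ p.1 = q.1 ∧ (‖(p.1 : E)‖ = 1 ∨ p.2 = q.2) := by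
  obtain ⟨⟨x, hx⟩, z⟩ := p
  obtain ⟨⟨x', hx'⟩, z'⟩ := q
  simp only [sphereJoin, Subtype.mk.injEq, (WithLp.toLp_injective 2).eq_iff, Prod.ext_iff]
  constructor
  · rintro ⟨rfl, hz⟩
    refine ⟨rfl, (mem_closedBall_zero_iff.1 hx).eq_or_lt.imp id fun hlt ↦ Subtype.ext ?_⟩
    have : 0 < √(1 - ‖x‖ ^ 2) := Real.sqrt_pos.2 (by nlinarith [norm_nonneg x])
    exact smul_right_injective F this.ne' hz
  · rintro ⟨rfl, hx1 | rfl⟩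
    · simp [hx1]
    · simp

theorem sphereJoin_surjective [Nontrivial F] : Surjective (sphereJoin (E := E) (F := F)) := by
  rintro ⟨v, hv⟩
  have hnorm : ‖v.fst‖ ^ 2 + ‖v.snd‖ ^ 2 = 1 := by
    rw [← WithLp.prod_norm_sq_eq_of_L2, mem_sphere_zero_iff_norm.1 hv, one_pow]
  have hfst : v.fst ∈ closedBall (0 : E) 1 :=
    mem_closedBall_zero_iff.2 (by nlinarith [norm_nonneg v.fst, norm_nonneg v.snd])
  have hsqrt : √(1 - ‖v.fst‖ ^ 2) = ‖v.snd‖ := by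
    rw [← hnorm, add_sub_cancel_left, Real.sqrt_sq (norm_nonneg _)]
  obtain ⟨z, hz, hvz⟩ : ∃ z ∈ sphere (0 : F) 1, ‖v.snd‖ • z = v.snd := by
    rcases eq_or_ne v.snd 0 with h0 | h0
    · obtain ⟨z, hz⟩ := (NormedSpace.sphere_nonempty (x := (0 : F))).2 zero_le_one
      exact ⟨z, hz, by simp [h0]⟩
    · exact ⟨‖v.snd‖⁻¹ • v.snd, by simp [norm_smul, h0], by simp [smul_smul, h0]⟩
  refine ⟨(⟨v.fst, hfst⟩, ⟨z, hz⟩), Subtype.ext ?_⟩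
  change WithLp.toLp 2 (v.fst, √(1 - ‖v.fst‖ ^ 2) • z) = v
  rw [hsqrt, hvz]
  rfl

end SphereJoin

section CircleWrap

def circleWrap (t : I) : sphere (0 : ℂ) 1 :=
  ⟨Circle.exp (2 * π * t), mem_sphere_zero_iff_norm.2 (Circle.norm_coe _)⟩

theorem continuous_circleWrap : Continuous circleWrap := by
  unfold circleWrap
  fun_prop

theorem circleWrap_surjective : Surjective circleWrap := by
  rintro ⟨z, hz⟩
  obtain ⟨θ, hθ⟩ := Circle.exp_surjective ⟨z, hz⟩
  obtain ⟨ψ, ⟨hψ0, hψ⟩, hθψ⟩ := Circle.periodic_exp.exists_mem_Ico₀ two_pi_pos θ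
  have h2π : 0 < 2 * π := two_pi_pos
  refine ⟨⟨ψ / (2 * π), div_nonneg hψ0 h2π.le, (div_le_one h2π).2 hψ.le⟩, Subtype.ext ?_⟩
  simp only [circleWrap, mul_div_cancel₀ ψ h2π.ne', ← hθψ, hθ]

theorem circleWrap_eq_circleWrap_iff {s t : I} :
    circleWrap s = circleWrap t ↔ s = t ∨ (s = 0 ∧ t = 1) ∨ (s = 1 ∧ t = 0) := by
  simp only [circleWrap, Subtype.mk.injEq, Circle.coe_inj, Circle.exp_eq_exp]
  constructor
  · rintro ⟨k, hk⟩
    have hst : (s : ℝ) = t + k := by nlinarith [pi_pos]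
    have hk1 : k ≤ 1 := by exact_mod_cast (show (k : ℝ) ≤ 1 by linarith [s.2.2, t.2.1])
    have hk2 : -1 ≤ k := by exact_mod_cast (show (-1 : ℝ) ≤ k by linarith [s.2.1, t.2.2])
    obtain rfl | rfl | rfl : k = -1 ∨ k = 0 ∨ k = 1 := by omega
    · refine Or.inr (Or.inl ⟨?_, ?_⟩) <;> ext <;> push_cast at hst ⊢ <;> linarith [s.2.1, t.2.2]
    · exact Or.inl (Subtype.ext (by simpa using hst))
    · refine Or.inr (Or.inr ⟨?_, ?_⟩) <;> ext <;> push_cast at hst ⊢ <;> linarith [s.2.2, t.2.1]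
  · rintro (rfl | ⟨rfl, rfl⟩ | ⟨rfl, rfl⟩)
    · exact ⟨0, by simp⟩
    · exact ⟨-1, by simp⟩
    · exact ⟨1, by simp⟩

end CircleWrap

def EuclideanSpace.equivProdComplex (m : ℕ) :
    EuclideanSpace ℝ (Fin (m + 2)) ≃ₗᵢ[ℝ] WithLp 2 (EuclideanSpace ℝ (Fin m) × ℂ) :=
  (LinearIsometryEquiv.piLpCongrLeft 2 ℝ ℝ finSumFinEquiv.symm).trans <|
    (PiLp.sumPiLpEquivProdLpPiLp 2 fun _ ↦ ℝ).trans <|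
      LinearIsometryEquiv.withLpProdCongr 2 (LinearIsometryEquiv.refl ℝ _)
        Complex.orthonormalBasisOneI.repr.symm

section OpenBook

variable {m : ℕ}

def openBookMap (m : ℕ) (p : Disk m × I) : Sph (m + 1) :=
  ⟨(EuclideanSpace.equivProdComplex m).symm (sphereJoin (p.1, circleWrap p.2)), by
    simp [Sph, mem_sphere_zero_iff_norm.1 (sphereJoin (p.1, circleWrap p.2)).2]⟩

theorem continuous_openBookMap : Continuous (openBookMap m) := by
  unfold openBookMap
  have := continuous_sphereJoin (E := EuclideanSpace ℝ (Fin m)) (F := ℂ)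
  have := continuous_circleWrap
  fun_prop

theorem openBookMap_surjective : Surjective (openBookMap m) := by
  rintro ⟨y, hy⟩
  obtain ⟨⟨x, z⟩, hxz⟩ := sphereJoin_surjective
    ⟨EuclideanSpace.equivProdComplex m y, by simpa [Sph] using hy⟩
  obtain ⟨t, rfl⟩ := circleWrap_surjective z
  exact ⟨(x, t), Subtype.ext (by simp [openBookMap, hxz])⟩

theorem openBookMap_eq_openBookMap_iff {p q : Disk m × I} :
    openBookMap m p = openBookMap m q ↔ p.1 = q.1 ∧
      (‖(p.1 : EuclideanSpace ℝ (Fin m))‖ = 1 ∨ p.2 = q.2 ∨ (p.2 = 0 ∧ q.2 = 1) ∨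
        (p.2 = 1 ∧ q.2 = 0)) := by
  rw [Subtype.ext_iff]
  simp only [openBookMap, LinearIsometryEquiv.map_eq_iff, Subtype.coe_inj,
    sphereJoin_eq_sphereJoin_iff, circleWrap_eq_circleWrap_iff]
  -- the two sides differ only in reading `p.1` as a point of `Disk m` or of `closedBall 0 1`
  rfl

theorem openBookMap_eq_of_obRel {p q : Disk m × I} (h : obRel m p q) :
    openBookMap m p = openBookMap m q := by
  rcases h with ⟨hx, hbinding⟩ | ⟨hx, hp, hq⟩
  · exact openBookMap_eq_openBookMap_iff.2 ⟨hx, Or.inl hbinding⟩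
  · exact openBookMap_eq_openBookMap_iff.2 ⟨hx, Or.inr <| Or.inr <| Or.inr ⟨hp, hq⟩⟩

theorem quot_mk_eq_of_openBookMap_eq {p q : Disk m × I} (h : openBookMap m p = openBookMap m q) :
    Quot.mk (obRel m) p = Quot.mk (obRel m) q := by
  obtain ⟨hx, hbinding | ht | ⟨hp, hq⟩ | ⟨hp, hq⟩⟩ := openBookMap_eq_openBookMap_iff.1 h
  · exact Quot.sound (Or.inl ⟨hx, hbinding⟩)
  · rw [Prod.ext hx ht]
  · exact (Quot.sound (show obRel m q p from Or.inr ⟨hx.symm, hq, hp⟩)).symm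
  · exact Quot.sound (Or.inr ⟨hx, hp, hq⟩)

end OpenBook

theorem openBook_disk_id_homeomorph_sphere_general (m : ℕ) :
    Nonempty (Quot (obRel m) ≃ₜ ↥(Sph (m + 1))) :=
  have : CompactSpace (Disk m) := isCompact_iff_compactSpace.1 (isCompact_closedBall 0 1)
  ⟨quotHomeomorphOfFibers (obRel m) (openBookMap m) continuous_openBookMap
    openBookMap_surjective (fun _ _ ↦ openBookMap_eq_of_obRel)
    (fun _ _ ↦ quot_mk_eq_of_openBookMap_eq)⟩

/-- The open book with page the `m`-disk and trivial monodromy is the sphere `S^{m+1}`. -/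
theorem openBook_disk_id_homeomorph_sphere (m : ℕ) (hm : 1 ≤ m) :
    Nonempty (Quot (obRel m) ≃ₜ ↥(Sph (m + 1))) :=
  openBook_disk_id_homeomorph_sphere_general m
end
end

section
/- Let k ≥ 1 and m ≥ 1. The quotient topological space of (S^k × D^m) × [0,1] by the equivalence relation generated by ((z,y),t) ~ ((z,y),t') for all z ∈ S^k, y ∈ D^m with ‖y‖ = 1, t,t' ∈ [0,1], and ((z,x),1) ~ ((z,x),0) for all (z,x) ∈ S^k × D^m, is homeomorphic to S^k × S^{m+1}. -/
/-!
Spinning the disk `D^m` about its boundary sweeps out `S^{m+1}`: the map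
`(y, t) ↦ (y, √(1 - ‖y‖²) cos 2πt, √(1 - ‖y‖²) sin 2πt)` from `D^m × [0,1]` onto `S^{m+1}`
identifies exactly the points the open book relation identifies (every `t` over `∂D^m`, and
`t = 0` with `t = 1`). Carrying the `S^k` factor along, the induced map from the compact quotient
to the Hausdorff space `S^k × S^{m+1}` is a continuous bijection, hence a homeomorphism.
-/

open Metric unitInterval

noncomputable section

/-- The relation generating the open book quotient on the page `S^k × D^m` with trivial
monodromy: `((z,y),t) ~ ((z,y),t')` for `‖y‖ = 1` and `((z,x),1) ~ ((z,x),0)`. -/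
def obRelSD (k m : ℕ) (p q : (↥(Sph k) × ↥(Disk m)) × I) : Prop :=
  (p.1 = q.1 ∧ ‖(p.1.2 : EuclideanSpace ℝ (Fin m))‖ = 1) ∨
  (p.1 = q.1 ∧ p.2 = 1 ∧ q.2 = 0)

open Real

theorem Quot.nonempty_homeomorph_of_continuous_surjective {X Y : Type*} [TopologicalSpace X]
    [CompactSpace X] [TopologicalSpace Y] [T2Space Y] {r : X → X → Prop} {f : X → Y}
    (hf : Continuous f) (hsurj : Function.Surjective f) (hr : ∀ p q, r p q → f p = f q)
    (hfib : ∀ p q, f p = f q → Quot.mk r p = Quot.mk r q) : Nonempty (Quot r ≃ₜ Y) := by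
  have hinj : Function.Injective (Quot.lift f hr) := by
    rintro ⟨p⟩ ⟨q⟩ h
    exact hfib p q h
  have hbij : Function.Bijective (Quot.lift f hr) := ⟨hinj, (Quot.surjective_lift hr).2 hsurj⟩
  exact ⟨(continuous_quot_lift hr hf).homeoOfEquivCompactToT2 (f := Equiv.ofBijective _ hbij)⟩

theorem exists_mem_Icc_sqrt_mul_cos_sin (a b : ℝ) :
    ∃ t ∈ Set.Icc (0 : ℝ) 1,
      √(a ^ 2 + b ^ 2) * cos (2 * π * t) = a ∧ √(a ^ 2 + b ^ 2) * sin (2 * π * t) = b := by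
  set z : ℂ := ⟨a, b⟩
  have hz : ‖z‖ = √(a ^ 2 + b ^ 2) := by
    simp [z, Complex.norm_def, Complex.normSq_apply, sq]
  set u := toIcoMod two_pi_pos 0 (Complex.arg z)
  obtain ⟨hu0, hu1⟩ : u ∈ Set.Ico 0 (2 * π) := toIcoMod_mem_Ico' two_pi_pos _
  have h2t : 2 * π * (u / (2 * π)) =
      Complex.arg z - toIcoDiv two_pi_pos 0 (Complex.arg z) * (2 * π) := by
    rw [mul_div_cancel₀ _ two_pi_pos.ne', ← zsmul_eq_mul]; rfl
  refine ⟨u / (2 * π), ⟨div_nonneg hu0 two_pi_pos.le, (div_le_one two_pi_pos).2 hu1.le⟩, ?_, ?_⟩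
  · rw [h2t, cos_sub_int_mul_two_pi, ← hz, Complex.norm_mul_cos_arg]
  · rw [h2t, sin_sub_int_mul_two_pi, ← hz, Complex.norm_mul_sin_arg]

theorem eq_or_eq_one_zero_of_cos_sin_eq {s t : ℝ} (hs : s ∈ Set.Icc (0 : ℝ) 1)
    (ht : t ∈ Set.Icc (0 : ℝ) 1) (hcos : cos (2 * π * s) = cos (2 * π * t))
    (hsin : sin (2 * π * s) = sin (2 * π * t)) :
    s = t ∨ (s = 1 ∧ t = 0) ∨ (s = 0 ∧ t = 1) := by
  obtain ⟨n, hn⟩ := (Angle.angle_eq_iff_two_pi_dvd_sub.1 (Angle.cos_sin_inj hcos hsin))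
  have hst : s - t = n := mul_left_cancel₀ two_pi_pos.ne' (by linarith)
  have hn1 : (n : ℝ) ≤ 1 := by linarith [hs.2, ht.1]
  have hn2 : -1 ≤ (n : ℝ) := by linarith [hs.1, ht.2]
  obtain rfl | rfl | rfl : n = -1 ∨ n = 0 ∨ n = 1 := by
    have : n ≤ 1 := by exact_mod_cast hn1
    have : -1 ≤ n := by exact_mod_cast hn2
    omega
  all_goals push_cast at hst
  · exact Or.inr (Or.inr ⟨by linarith [hs.1, ht.2], by linarith [hs.1, ht.2]⟩)
  · exact Or.inl (by linarith)
  · exact Or.inr (Or.inl ⟨by linarith [hs.2, ht.1], by linarith [hs.2, ht.1]⟩)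

theorem EuclideanSpace.norm_sq_toLp_snoc {n : ℕ} (x : Fin n → ℝ) (a : ℝ) :
    ‖(WithLp.toLp 2 (Fin.snoc x a : Fin (n + 1) → ℝ))‖ ^ 2 = ‖WithLp.toLp 2 x‖ ^ 2 + a ^ 2 := by
  simp [EuclideanSpace.norm_sq_eq, Fin.sum_univ_castSucc]

def diskSpin (m : ℕ) (y : EuclideanSpace ℝ (Fin m)) (t : ℝ) : EuclideanSpace ℝ (Fin (m + 1 + 1)) :=
  WithLp.toLp 2 (Fin.snoc (Fin.snoc y.ofLp (√(1 - ‖y‖ ^ 2) * cos (2 * π * t)))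
    (√(1 - ‖y‖ ^ 2) * sin (2 * π * t)))

section diskSpin

variable {m : ℕ}

theorem diskSpin_of_norm_eq_one {y : EuclideanSpace ℝ (Fin m)} (hy : ‖y‖ = 1) (s t : ℝ) :
    diskSpin m y s = diskSpin m y t := by
  simp [diskSpin, hy]

theorem diskSpin_one (y : EuclideanSpace ℝ (Fin m)) : diskSpin m y 1 = diskSpin m y 0 := by
  simp [diskSpin]

theorem norm_diskSpin {y : EuclideanSpace ℝ (Fin m)} (hy : ‖y‖ ≤ 1) (t : ℝ) :
    ‖diskSpin m y t‖ = 1 := by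
  have hr : √(1 - ‖y‖ ^ 2) ^ 2 = 1 - ‖y‖ ^ 2 := sq_sqrt (by nlinarith [norm_nonneg y])
  have hsq : ‖diskSpin m y t‖ ^ 2 = 1 := by
    rw [diskSpin, EuclideanSpace.norm_sq_toLp_snoc, EuclideanSpace.norm_sq_toLp_snoc, mul_pow,
      mul_pow, hr, WithLp.toLp_ofLp]
    linear_combination (1 - ‖y‖ ^ 2) * sin_sq_add_cos_sq (2 * π * t)
  exact (pow_eq_one_iff_of_nonneg (norm_nonneg _) two_ne_zero).1 hsq

theorem eq_of_diskSpin_eq {y y' : EuclideanSpace ℝ (Fin m)} {s t : ℝ}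
    (h : diskSpin m y s = diskSpin m y' t) : y = y' :=
  WithLp.ofLp_injective 2 <| by
    simpa [diskSpin, Fin.init_snoc] using congrArg (fun v => Fin.init (Fin.init v.ofLp)) h

theorem cos_sin_eq_of_diskSpin_eq {y : EuclideanSpace ℝ (Fin m)} (hy : ‖y‖ < 1) {s t : ℝ}
    (h : diskSpin m y s = diskSpin m y t) :
    cos (2 * π * s) = cos (2 * π * t) ∧ sin (2 * π * s) = sin (2 * π * t) := by
  have hr : √(1 - ‖y‖ ^ 2) ≠ 0 := (sqrt_pos.2 (by nlinarith [norm_nonneg y])).ne'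
  have hcos := congrArg (fun v => v (Fin.castSucc (Fin.last m))) h
  have hsin := congrArg (fun v => v (Fin.last (m + 1))) h
  simp only [diskSpin, PiLp.toLp_apply, Fin.snoc_castSucc, Fin.snoc_last] at hcos hsin
  exact ⟨mul_left_cancel₀ hr hcos, mul_left_cancel₀ hr hsin⟩

theorem exists_diskSpin_eq {v : EuclideanSpace ℝ (Fin (m + 1 + 1))} (hv : ‖v‖ = 1) :
    ∃ y : EuclideanSpace ℝ (Fin m), ‖y‖ ≤ 1 ∧ ∃ t ∈ Set.Icc (0 : ℝ) 1, diskSpin m y t = v := by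
  set y : EuclideanSpace ℝ (Fin m) := WithLp.toLp 2 (Fin.init (Fin.init v.ofLp))
  set a := v (Fin.castSucc (Fin.last m))
  set b := v (Fin.last (m + 1))
  have hv_eq : v = WithLp.toLp 2 (Fin.snoc (Fin.snoc y.ofLp a) b) := by
    rw [WithLp.ofLp_toLp, show a = Fin.init v.ofLp (Fin.last m) from rfl, Fin.snoc_init_self,
      Fin.snoc_init_self, WithLp.toLp_ofLp]
  have hsum : ‖y‖ ^ 2 + a ^ 2 + b ^ 2 = 1 := by
    rw [← one_pow 2, ← hv, hv_eq, EuclideanSpace.norm_sq_toLp_snoc,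
      EuclideanSpace.norm_sq_toLp_snoc]
  obtain ⟨t, ht, hcos, hsin⟩ := exists_mem_Icc_sqrt_mul_cos_sin a b
  refine ⟨y, by nlinarith [norm_nonneg y], t, ht, ?_⟩
  rw [hv_eq, diskSpin, show 1 - ‖y‖ ^ 2 = a ^ 2 + b ^ 2 by linarith, hcos, hsin]

@[fun_prop]
theorem Continuous.diskSpin {X : Type*} [TopologicalSpace X] {f : X → EuclideanSpace ℝ (Fin m)}
    {g : X → ℝ} (hf : Continuous f) (hg : Continuous g) :
    Continuous fun x ↦ diskSpin m (f x) (g x) := by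
  unfold _root_.diskSpin
  fun_prop

end diskSpin

instance (k : ℕ) : CompactSpace (Sph k) := isCompact_iff_compactSpace.1 (isCompact_sphere 0 1)

instance (m : ℕ) : CompactSpace (Disk m) := isCompact_iff_compactSpace.1 (isCompact_closedBall 0 1)

section obMapSD

variable {k m : ℕ}

theorem norm_le_one_of_mem_disk (y : Disk m) : ‖(y : EuclideanSpace ℝ (Fin m))‖ ≤ 1 :=
  mem_closedBall_zero_iff.1 y.2

variable (k m) in
def obMapSD (p : (Sph k × Disk m) × I) : Sph k × Sph (m + 1) :=
  (p.1.1, ⟨diskSpin m p.1.2 p.2,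
    mem_sphere_zero_iff_norm.2 (norm_diskSpin (norm_le_one_of_mem_disk _) _)⟩)

theorem obMapSD_eq_of_obRelSD {p q : (Sph k × Disk m) × I} (h : obRelSD k m p q) :
    obMapSD k m p = obMapSD k m q := by
  obtain ⟨⟨z, y⟩, t⟩ := p
  obtain ⟨⟨z', y'⟩, t'⟩ := q
  rcases h with ⟨heq, hy⟩ | ⟨heq, rfl, rfl⟩ <;> obtain ⟨rfl, rfl⟩ := Prod.mk.inj heq
  · exact Prod.ext rfl (Subtype.ext (diskSpin_of_norm_eq_one hy _ _))
  · exact Prod.ext rfl (Subtype.ext (diskSpin_one _))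

theorem quot_mk_eq_of_obMapSD_eq {p q : (Sph k × Disk m) × I}
    (h : obMapSD k m p = obMapSD k m q) : Quot.mk (obRelSD k m) p = Quot.mk (obRelSD k m) q := by
  obtain ⟨⟨z, y⟩, t⟩ := p
  obtain ⟨⟨z', y'⟩, t'⟩ := q
  obtain ⟨rfl, hspin⟩ := Prod.mk.inj h
  obtain rfl : y = y' := Subtype.ext (eq_of_diskSpin_eq (congrArg Subtype.val hspin))
  rcases (norm_le_one_of_mem_disk y).eq_or_lt with hy | hy
  · exact Quot.sound (Or.inl ⟨rfl, hy⟩)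
  obtain ⟨hcos, hsin⟩ := cos_sin_eq_of_diskSpin_eq hy (congrArg Subtype.val hspin)
  rcases eq_or_eq_one_zero_of_cos_sin_eq t.2 t'.2 hcos hsin with h | ⟨h1, h0⟩ | ⟨h0, h1⟩
  · rw [Subtype.ext h]
  · exact Quot.sound (Or.inr ⟨rfl, Subtype.ext h1, Subtype.ext h0⟩)
  · refine (Quot.sound ?_).symm
    exact Or.inr ⟨rfl, Subtype.ext h1, Subtype.ext h0⟩

theorem obMapSD_surjective : Function.Surjective (obMapSD k m) := by
  rintro ⟨z, v, hv⟩
  obtain ⟨y, hy, t, ht, rfl⟩ := exists_diskSpin_eq (mem_sphere_zero_iff_norm.1 hv)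
  exact ⟨((z, ⟨y, mem_closedBall_zero_iff.2 hy⟩), ⟨t, ht⟩), rfl⟩

theorem continuous_obMapSD : Continuous (obMapSD k m) := by
  unfold obMapSD
  fun_prop

end obMapSD

theorem openBook_sphere_prod_disk_id_homeo_general (k m : ℕ) :
    Nonempty (Quot (obRelSD k m) ≃ₜ ↥(Sph k) × ↥(Sph (m + 1))) :=
  Quot.nonempty_homeomorph_of_continuous_surjective continuous_obMapSD obMapSD_surjective
    (fun _ _ ↦ obMapSD_eq_of_obRelSD) (fun _ _ ↦ quot_mk_eq_of_obMapSD_eq)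

/-- `Ob(S^k × D^m, id) ≅ S^k × S^{m+1}`. -/
theorem openBook_sphere_prod_disk_id_homeo (k m : ℕ) (hk : 1 ≤ k) (hm : 1 ≤ m) :
    Nonempty (Quot (obRelSD k m) ≃ₜ ↥(Sph k) × ↥(Sph (m + 1))) :=
  openBook_sphere_prod_disk_id_homeo_general k m
end
end

section
/- Let m ≥ 1 and let μ, ν : Fin m → ℕ satisfy ∑_{i=0}^{m-1} (-1)^i μ(i) = ∑_{i=0}^{m-1} (-1)^i ν(i) (as integers). Then there exist s, t : Fin m → ℕ with s(m-1) = t(m-1) = 0 such that for every i ∈ Fin m: μ(i) + s(i) + (if i ≥ 1 then s(i-1) else 0) = ν(i) + t(i) + (if i ≥ 1 then t(i-1) else 0). Equivalently, μ and ν become equal after each is increased by a finite ℕ-linear combination of the vectors δ_j + δ_{j+1} (j = 0, …, m-2), where δ_j is the indicator tuple of position j. -/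
/-- If two tuples of handle counts have the same alternating sum (Euler characteristic),
then they can be made equal by adding canceling pairs of consecutive handles: there are
`s, t : Fin m → ℕ` vanishing at the top index `m-1` such that componentwise
`μᵢ + sᵢ + sᵢ₋₁ = νᵢ + tᵢ + tᵢ₋₁`. -/
theorem handle_counts_equalize (m : ℕ) (hm : 1 ≤ m) (μ ν : Fin m → ℕ)
    (h : ∑ i : Fin m, (-1 : ℤ) ^ (i : ℕ) * μ i = ∑ i : Fin m, (-1 : ℤ) ^ (i : ℕ) * ν i) :
    ∃ s t : Fin m → ℕ,
      s ⟨m - 1, by omega⟩ = 0 ∧ t ⟨m - 1, by omega⟩ = 0 ∧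
      ∀ i : Fin m,
        μ i + s i + (if h' : 1 ≤ (i : ℕ) then s ⟨(i : ℕ) - 1, by have := i.2; omega⟩ else 0) =
        ν i + t i + (if h' : 1 ≤ (i : ℕ) then t ⟨(i : ℕ) - 1, by have := i.2; omega⟩ else 0) := by
  classical
  set d : ℕ → ℤ := fun n => if h : n < m then (μ ⟨n, h⟩ : ℤ) - (ν ⟨n, h⟩ : ℤ) else 0 with hd
  set x : ℕ → ℤ := fun n => Nat.rec (d 0) (fun n xn => d (n + 1) - xn) n with hxdef
  have hx0 : x 0 = d 0 := rfl
  have hxs : ∀ n, x (n + 1) = d (n + 1) - x n := fun n => rfl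
  have key : ∀ n, (-1 : ℤ) ^ n * x n = ∑ k ∈ Finset.range (n + 1), (-1 : ℤ) ^ k * d k := by
    intro n
    induction n with
    | zero => simp [hx0]
    | succ n ih =>
      rw [Finset.sum_range_succ, ← ih, hxs]
      ring
  have hsum : ∑ k ∈ Finset.range m, (-1 : ℤ) ^ k * d k = 0 := by
    have h1 : ∑ k ∈ Finset.range m, (-1 : ℤ) ^ k * d k
        = ∑ i : Fin m, (-1 : ℤ) ^ (i : ℕ) * ((μ i : ℤ) - (ν i : ℤ)) := by
      rw [← Fin.sum_univ_eq_sum_range (fun k => (-1 : ℤ) ^ k * d k) m]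
      apply Finset.sum_congr rfl
      intro k _
      simp [hd, k.isLt]
    rw [h1]
    simp only [mul_sub, Finset.sum_sub_distrib, h, sub_self]
  have hxm : x (m - 1) = 0 := by
    have hk := key (m - 1)
    rw [show m - 1 + 1 = m by omega, hsum] at hk
    have hne : ((-1 : ℤ) ^ (m - 1)) ≠ 0 := pow_ne_zero _ (by norm_num)
    exact (mul_eq_zero.mp hk).resolve_left hne
  refine ⟨fun i => (-(x (i : ℕ))).toNat, fun i => (x (i : ℕ)).toNat, by simp [hxm],
    by simp [hxm], ?_⟩
  intro i
  have hdv : d (i : ℕ) = (μ i : ℤ) - (ν i : ℤ) := by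
    simp [hd, i.isLt]
  by_cases h1 : 1 ≤ (i : ℕ)
  · simp only [dif_pos h1]
    have hrec : x (i : ℕ) = (μ i : ℤ) - (ν i : ℤ) - x ((i : ℕ) - 1) := by
      have he : (i : ℕ) = ((i : ℕ) - 1) + 1 := by omega
      rw [← hdv, he, hxs, ← he]
    omega
  · simp only [dif_neg h1]
    have hi0 : (i : ℕ) = 0 := by omega
    have hrec : x (i : ℕ) = (μ i : ℤ) - (ν i : ℤ) := by
      rw [hi0] at hdv ⊢
      rw [hx0, hdv]
    omega
end

section
/- Let n ≥ 5 be odd and set m = n - 2. Let μ, ν : {1,…,m} → ℕ satisfy ∑_{i=1}^{m} (-1)^i μ_i ≡ ∑_{i=1}^{m} (-1)^i ν_i (mod 2). Let G be the finite set of vectors in ℕ^m consisting of the canceling-pair vectors g_j = δ_j + δ_{j+1} for 1 ≤ j ≤ m-1 together with the stabilization vectors h_k = δ_{k-1} + δ_{n-k} for 2 ≤ k ≤ n-1, where δ_i denotes the indicator tuple of position i. Then there exist ℕ-linear combinations a and b of the vectors in G such that μ + a = ν + b (componentwise). -/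
/-- The indicator tuple of (1-based) position `j` in `ℕ^m`. -/
def deltaTuple (m : ℕ) (j : ℕ) : Fin m → ℕ := fun i => if (i : ℕ) + 1 = j then 1 else 0

/-- The generating set consisting of the canceling-pair vectors `δ_j + δ_{j+1}` for
`1 ≤ j ≤ m-1` together with the stabilization vectors `δ_{k-1} + δ_{n-k}` for
`2 ≤ k ≤ n-1` (positions are 1-based). -/
def stabGen (n m : ℕ) : Set (Fin m → ℕ) :=
  {v | (∃ j : ℕ, 1 ≤ j ∧ j ≤ m - 1 ∧ v = deltaTuple m j + deltaTuple m (j + 1)) ∨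
       (∃ k : ℕ, 2 ≤ k ∧ k ≤ n - 1 ∧ v = deltaTuple m (k - 1) + deltaTuple m (n - k))}

namespace StabAux

/-- The equivalence: `x` and `y` agree after adding elements of the closure. -/
def Rel (n m : ℕ) (x y : Fin m → ℕ) : Prop :=
  ∃ a ∈ AddSubmonoid.closure (stabGen n m), ∃ b ∈ AddSubmonoid.closure (stabGen n m),
    x + a = y + b

variable {n m : ℕ}

lemma Rel.refl (x : Fin m → ℕ) : Rel n m x x :=
  ⟨0, zero_mem _, 0, zero_mem _, rfl⟩

lemma Rel.symm {x y : Fin m → ℕ} (h : Rel n m x y) : Rel n m y x := by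
  obtain ⟨a, ha, b, hb, h⟩ := h
  exact ⟨b, hb, a, ha, h.symm⟩

lemma Rel.trans {x y z : Fin m → ℕ} (h1 : Rel n m x y) (h2 : Rel n m y z) :
    Rel n m x z := by
  obtain ⟨a, ha, b, hb, e1⟩ := h1
  obtain ⟨a', ha', b', hb', e2⟩ := h2
  refine ⟨a + a', add_mem ha ha', b' + b, add_mem hb' hb, ?_⟩
  calc x + (a + a') = (x + a) + a' := by ring
    _ = (y + b) + a' := by rw [e1]
    _ = (y + a') + b := by ring
    _ = (z + b') + b := by rw [e2]
    _ = z + (b' + b) := by ring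

lemma Rel.addRight {x y : Fin m → ℕ} (z : Fin m → ℕ) (h : Rel n m x y) :
    Rel n m (x + z) (y + z) := by
  obtain ⟨a, ha, b, hb, e⟩ := h
  refine ⟨a, ha, b, hb, ?_⟩
  calc (x + z) + a = (x + a) + z := by ring
    _ = (y + b) + z := by rw [e]
    _ = (y + z) + b := by ring

lemma gen_G (_hnm : n = m + 2) {j : ℕ} (h1 : 1 ≤ j) (h2 : j ≤ m - 1) :
    deltaTuple m j + deltaTuple m (j + 1) ∈ AddSubmonoid.closure (stabGen n m) :=
  AddSubmonoid.subset_closure (Or.inl ⟨j, h1, h2, rfl⟩)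

lemma gen_H (hnm : n = m + 2) {p : ℕ} (h1 : 1 ≤ p) (h2 : p ≤ m) :
    deltaTuple m p + deltaTuple m (m + 1 - p) ∈ AddSubmonoid.closure (stabGen n m) := by
  apply AddSubmonoid.subset_closure
  right
  refine ⟨p + 1, by omega, by omega, ?_⟩
  have e1 : p + 1 - 1 = p := by omega
  have e2 : n - (p + 1) = m + 1 - p := by omega
  rw [e1, e2]

/-- shift a single handle index by 2. -/
lemma shift2 (hnm : n = m + 2) (x : Fin m → ℕ) {i : ℕ} (h1 : 1 ≤ i) (h2 : i + 2 ≤ m) :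
    Rel n m (x + deltaTuple m i) (x + deltaTuple m (i + 2)) := by
  refine ⟨deltaTuple m (i + 1) + deltaTuple m (i + 2),
    gen_G hnm (by omega) (by omega),
    deltaTuple m i + deltaTuple m (i + 1),
    gen_G hnm (by omega) (by omega), ?_⟩
  ring

lemma shift_up (hnm : n = m + 2) (x : Fin m → ℕ) :
    ∀ d i : ℕ, 1 ≤ i → i + 2 * d ≤ m →
      Rel n m (x + deltaTuple m i) (x + deltaTuple m (i + 2 * d)) := by
  intro d
  induction d with
  | zero => intro i _ _; simpa using Rel.refl _
  | succ d ih =>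
    intro i h1 h2
    have step := shift2 hnm x (i := i + 2 * d) (by omega) (by omega)
    have e : i + 2 * (d + 1) = (i + 2 * d) + 2 := by ring
    rw [e]
    exact (ih i h1 (by omega)).trans step

lemma same_parity (hnm : n = m + 2) (x : Fin m → ℕ) {i j : ℕ}
    (h1 : 1 ≤ i) (h2 : i ≤ m) (h3 : 1 ≤ j) (h4 : j ≤ m) (hp : i % 2 = j % 2) :
    Rel n m (x + deltaTuple m i) (x + deltaTuple m j) := by
  rcases le_or_gt i j with hle | hlt
  · obtain ⟨d, rfl⟩ : ∃ d, j = i + 2 * d := ⟨(j - i) / 2, by omega⟩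
    exact shift_up hnm x d i h1 h4
  · obtain ⟨d, rfl⟩ : ∃ d, i = j + 2 * d := ⟨(i - j) / 2, by omega⟩
    exact (shift_up hnm x d j h3 h2).symm

/-- cross parity at the middle index `c = (m+1)/2`. -/
lemma cross (hnm : n = m + 2) (hodd : m % 2 = 1) (hm3 : 3 ≤ m) (x : Fin m → ℕ) :
    Rel n m (x + deltaTuple m ((m + 1) / 2)) (x + deltaTuple m ((m + 1) / 2 + 1)) := by
  set c := (m + 1) / 2 with hc
  have hcc : m + 1 - c = c := by omega
  refine ⟨deltaTuple m c + deltaTuple m (c + 1), gen_G hnm (by omega) (by omega),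
    deltaTuple m c + deltaTuple m (m + 1 - c), gen_H hnm (by omega) (by omega), ?_⟩
  rw [hcc]
  ring

/-- any single handle index can be moved to the middle index. -/
lemma to_middle (hnm : n = m + 2) (hodd : m % 2 = 1) (hm3 : 3 ≤ m) (x : Fin m → ℕ)
    {i : ℕ} (h1 : 1 ≤ i) (h2 : i ≤ m) :
    Rel n m (x + deltaTuple m i) (x + deltaTuple m ((m + 1) / 2)) := by
  set c := (m + 1) / 2 with hc
  by_cases hp : i % 2 = c % 2
  · exact same_parity hnm x h1 h2 (by omega) (by omega) hp
  · have hp' : i % 2 = (c + 1) % 2 := by omega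
    have h' := same_parity hnm x h1 h2 (j := c + 1) (by omega) (by omega) hp'
    exact h'.trans (cross hnm hodd hm3 x).symm

lemma delta_eq_single {i : Fin m} :
    deltaTuple m ((i : ℕ) + 1) = fun j => if j = i then 1 else 0 := by
  funext j
  simp only [deltaTuple]
  by_cases h : j = i
  · subst h; simp
  · rw [if_neg h, if_neg]
    intro hj
    exact h (Fin.ext (by omega))

lemma sum_delta {i : Fin m} : ∑ j : Fin m, deltaTuple m ((i : ℕ) + 1) j = 1 := by
  rw [delta_eq_single]
  simp

/-- every tuple is related to a multiple of the middle delta. -/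
lemma reduce_to_middle (hnm : n = m + 2) (hodd : m % 2 = 1) (hm3 : 3 ≤ m) :
    ∀ S : ℕ, ∀ μ : Fin m → ℕ, (∑ i : Fin m, μ i) = S →
      Rel n m μ (S • deltaTuple m ((m + 1) / 2)) := by
  intro S
  induction S with
  | zero =>
    intro μ hS
    have hμ : μ = 0 := by
      funext j
      exact Finset.sum_eq_zero_iff.mp hS j (Finset.mem_univ j)
    rw [hμ, zero_smul]
    exact Rel.refl _
  | succ S ih =>
    intro μ hS
    have hex : ∃ i : Fin m, μ i ≠ 0 := by
      by_contra hc
      push_neg at hc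
      have : (∑ i : Fin m, μ i) = 0 := Finset.sum_eq_zero fun i _ => hc i
      omega
    obtain ⟨i, hi⟩ := hex
    set δ := deltaTuple m ((i : ℕ) + 1) with hδ
    set μ' : Fin m → ℕ := fun j => μ j - δ j with hμ'
    have hsplit : μ = μ' + δ := by
      funext j
      simp only [hμ', hδ, Pi.add_apply, delta_eq_single]
      by_cases h : j = i
      · subst h; rw [if_pos rfl]; omega
      · simp [h]
    have hsum' : (∑ j : Fin m, μ' j) = S := by
      have := congrArg (fun f => ∑ j : Fin m, f j) hsplit
      simp only [Pi.add_apply, Finset.sum_add_distrib] at this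
      rw [hδ, sum_delta] at this
      omega
    have hIH := ih μ' hsum'
    have h1 : Rel n m μ (S • deltaTuple m ((m + 1) / 2) + δ) := by
      rw [hsplit]
      exact hIH.addRight δ
    have h2 : Rel n m (S • deltaTuple m ((m + 1) / 2) + δ)
        (S • deltaTuple m ((m + 1) / 2) + deltaTuple m ((m + 1) / 2)) :=
      to_middle hnm hodd hm3 _ (by omega) (by omega)
    have e : (S + 1) • deltaTuple m ((m + 1) / 2)
        = S • deltaTuple m ((m + 1) / 2) + deltaTuple m ((m + 1) / 2) := succ_nsmul _ _
    rw [e]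
    exact h1.trans h2

/-- drop pairs at the middle index. -/
lemma drop_pairs (hnm : n = m + 2) (hodd : m % 2 = 1) (hm3 : 3 ≤ m) :
    ∀ k r : ℕ, Rel n m ((2 * k + r) • deltaTuple m ((m + 1) / 2))
      (r • deltaTuple m ((m + 1) / 2)) := by
  intro k
  induction k with
  | zero => intro r; simpa using Rel.refl _
  | succ k ih =>
    intro r
    set c := (m + 1) / 2 with hc
    have hcc : m + 1 - c = c := by omega
    have hH : deltaTuple m c + deltaTuple m c ∈ AddSubmonoid.closure (stabGen n m) := by
      have := gen_H hnm (p := c) (by omega) (by omega)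
      rwa [hcc] at this
    have step : Rel n m ((2 * (k + 1) + r) • deltaTuple m c) ((2 * k + r) • deltaTuple m c) := by
      refine ⟨0, zero_mem _, deltaTuple m c + deltaTuple m c, hH, ?_⟩
      have e : 2 * (k + 1) + r = (2 * k + r) + 2 := by ring
      rw [e, add_nsmul, two_nsmul]
      ring
    exact step.trans (ih r)

end StabAux

open StabAux

/-- For odd `n ≥ 5` and `m = n - 2`: if the alternating sums of two handle-count tuples
agree mod 2, then the tuples become equal after adding ℕ-linear combinations of the
canceling-pair and stabilization vectors. -/
theorem handle_counts_equalize_mod_two (n : ℕ) (hn : 5 ≤ n) (hodd : Odd n)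
    (m : ℕ) (hm : m = n - 2) (μ ν : Fin m → ℕ)
    (h : Int.ModEq 2 (∑ i : Fin m, (-1 : ℤ) ^ ((i : ℕ) + 1) * μ i)
      (∑ i : Fin m, (-1 : ℤ) ^ ((i : ℕ) + 1) * ν i)) :
    ∃ a ∈ AddSubmonoid.closure (stabGen n m), ∃ b ∈ AddSubmonoid.closure (stabGen n m),
      μ + a = ν + b := by
  obtain ⟨t, ht⟩ := hodd
  have hnm : n = m + 2 := by omega
  have hmodd : m % 2 = 1 := by omega
  have hm3 : 3 ≤ m := by omega
  -- the alternating sum agrees with the plain sum mod 2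
  have key : ∀ f : Fin m → ℕ, (2 : ℤ) ∣
      (∑ i : Fin m, (-1 : ℤ) ^ ((i : ℕ) + 1) * f i) - (∑ i : Fin m, (f i : ℤ)) := by
    intro f
    rw [← Finset.sum_sub_distrib]
    apply Finset.dvd_sum
    intro i _
    rcases Nat.even_or_odd ((i : ℕ) + 1) with he | ho
    · rw [he.neg_one_pow]; simp
    · rw [ho.neg_one_pow]
      exact ⟨-(f i : ℤ), by ring⟩
    -- done
  have hdvd : (2 : ℤ) ∣ (∑ i : Fin m, (ν i : ℤ)) - (∑ i : Fin m, (μ i : ℤ)) := by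
    have h1 := key μ
    have h2 := key ν
    have h3 : (2 : ℤ) ∣ (∑ i : Fin m, (-1 : ℤ) ^ ((i : ℕ) + 1) * ν i)
        - (∑ i : Fin m, (-1 : ℤ) ^ ((i : ℕ) + 1) * μ i) := Int.ModEq.dvd h
    have := dvd_sub (dvd_add h3 h1) h2
    have e : ((∑ i : Fin m, (-1 : ℤ) ^ ((i : ℕ) + 1) * ν i)
        - (∑ i : Fin m, (-1 : ℤ) ^ ((i : ℕ) + 1) * μ i)
        + ((∑ i : Fin m, (-1 : ℤ) ^ ((i : ℕ) + 1) * μ i) - ∑ i : Fin m, (μ i : ℤ)))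
        - ((∑ i : Fin m, (-1 : ℤ) ^ ((i : ℕ) + 1) * ν i) - ∑ i : Fin m, (ν i : ℤ))
        = (∑ i : Fin m, (ν i : ℤ)) - (∑ i : Fin m, (μ i : ℤ)) := by ring
    rwa [e] at this
  set Sμ := ∑ i : Fin m, μ i with hSμ
  set Sν := ∑ i : Fin m, ν i with hSν
  have hcastμ : (∑ i : Fin m, (μ i : ℤ)) = (Sμ : ℤ) := by rw [hSμ]; push_cast; rfl
  have hcastν : (∑ i : Fin m, (ν i : ℤ)) = (Sν : ℤ) := by rw [hSν]; push_cast; rfl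
  rw [hcastμ, hcastν] at hdvd
  have hpar : Sμ % 2 = Sν % 2 := by omega
  have hμrel : Rel n m μ ((Sμ % 2) • deltaTuple m ((m + 1) / 2)) := by
    have h1 := reduce_to_middle hnm hmodd hm3 Sμ μ rfl
    have h2 := drop_pairs hnm hmodd hm3 (Sμ / 2) (Sμ % 2)
    have e : 2 * (Sμ / 2) + Sμ % 2 = Sμ := by omega
    rw [e] at h2
    exact h1.trans h2
  have hνrel : Rel n m ν ((Sν % 2) • deltaTuple m ((m + 1) / 2)) := by
    have h1 := reduce_to_middle hnm hmodd hm3 Sν ν rfl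
    have h2 := drop_pairs hnm hmodd hm3 (Sν / 2) (Sν % 2)
    have e : 2 * (Sν / 2) + Sν % 2 = Sν := by omega
    rw [e] at h2
    exact h1.trans h2
  rw [hpar] at hμrel
  exact hμrel.trans hνrel.symm
end
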